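/- Let I be an interval with inf I = 0 and f : I → ℝ continuous strictly monotone. If there exists ε ∈ I such that A_f restricted to (0,ε) is a Hardy mean, then there exists a function c_f : I → (0,∞) such that Σₙ A_f(a₁,…,aₙ) ≤ c_f(‖a‖_∞)·Σₙ aₙ for every sequence (aₙ) in I with Σ aₙ < ∞. -/

import Mathlib

/-!
For increasing `f`, put `ε' = ε / 2` and `t = 3ε / 4`. A summable sequence `a` in `I` attains its
maximum `x`, and at most `N ≤ Σ a / ε'` of its terms are `≥ ε'`. Truncating `a` at `ε'` and
prepending `N m` copies of `t`, where `m` depends only on `f x`, gives a sequence in `(0, ε)` with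
sum at most `N m t + Σ a`. From index `N m²` on, the `n`-th mean of `a` is at most the
`(N m + n)`-th mean of the new sequence, and the earlier means are at most `x`. The Hardy inequality
on `(0, ε)` then yields the bound with `c x = (m² x + C m t) / ε' + C`. Decreasing `f` is reduced
to increasing `-f`, which generates the same mean.
-/

/-- The quasi-arithmetic mean generated by `f`, the inverse being taken on `I`. -/
noncomputable def qam (f : ℝ → ℝ) (I : Set ℝ) (n : ℕ) (a : Fin n → ℝ) : ℝ :=
  Function.invFunOn f I ((∑ i, f (a i)) / n)

open Finset Filter Topology

section QuasiArithmeticMean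

variable {I : Set ℝ} {f : ℝ → ℝ}

theorem sum_div_mem_image (hconn : I.OrdConnected) (hf : ContinuousOn f I) {n : ℕ} (hn : n ≠ 0)
    {a : Fin n → ℝ} (ha : ∀ i, a i ∈ I) : (∑ i, f (a i)) / n ∈ f '' I := by
  have hconv : Convex ℝ (f '' I) := (hconn.isPreconnected.image f hf).ordConnected.convex
  have hmem := hconv.sum_mem (t := univ) (w := fun _ => (n : ℝ)⁻¹) (z := fun i => f (a i))
    (fun _ _ => by positivity) (by simp [hn]) (fun i _ => Set.mem_image_of_mem f (ha i))
  simpa only [smul_eq_mul, inv_mul_eq_div, ← sum_div] using hmem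

theorem qam_mem (hconn : I.OrdConnected) (hf : ContinuousOn f I) {n : ℕ} (hn : n ≠ 0)
    {a : Fin n → ℝ} (ha : ∀ i, a i ∈ I) : qam f I n a ∈ I :=
  Function.invFunOn_mem (sum_div_mem_image hconn hf hn ha)

theorem apply_qam (hconn : I.OrdConnected) (hf : ContinuousOn f I) {n : ℕ} (hn : n ≠ 0)
    {a : Fin n → ℝ} (ha : ∀ i, a i ∈ I) : f (qam f I n a) = (∑ i, f (a i)) / n :=
  Function.invFunOn_eq (sum_div_mem_image hconn hf hn ha)

theorem qam_neg (hconn : I.OrdConnected) (hf : ContinuousOn f I) (hinj : I.InjOn f) {n : ℕ}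
    (hn : n ≠ 0) {a : Fin n → ℝ} (ha : ∀ i, a i ∈ I) :
    qam (fun y => -f y) I n a = qam f I n a := by
  refine hinj (qam_mem hconn hf.neg hn ha) (qam_mem hconn hf hn ha) ?_
  have hneg := apply_qam (f := fun y => -f y) hconn hf.neg hn ha
  simp only [sum_neg_distrib, neg_div, neg_inj] at hneg
  exact hneg.trans (apply_qam hconn hf hn ha).symm

end QuasiArithmeticMean

theorem Set.OrdConnected.Ioo_csInf_subset {I : Set ℝ} (hconn : I.OrdConnected) (hbdd : BddBelow I)
    {ε : ℝ} (hε : ε ∈ I) : Set.Ioo (sInf I) ε ⊆ I := fun _ hy =>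
  let ⟨_, hz, hzy⟩ := (csInf_lt_iff hbdd ⟨ε, hε⟩).1 hy.1
  hconn.out hz hε ⟨hzy.le, hy.2.le⟩

theorem exists_forall_le_of_tendsto_zero {ι : Type*} {a : ι → ℝ} (h : Tendsto a cofinite (𝓝 0))
    {i₀ : ι} (hi₀ : 0 < a i₀) : ∃ i, ∀ j, a j ≤ a i :=
  letI : TopologicalSpace ι := ⊥
  haveI : DiscreteTopology ι := ⟨rfl⟩
  continuous_of_discreteTopology.exists_forall_ge' i₀ <| by
    rw [cocompact_eq_cofinite]
    exact (h.eventually (gt_mem_nhds hi₀)).mono fun _ => le_of_lt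

theorem card_filter_le_floor_tsum_div {ι : Type*} {a : ι → ℝ} (ha : ∀ i, 0 ≤ a i)
    (hs : Summable a) {δ : ℝ} (hδ : 0 < δ) (s : Finset ι) :
    #(s.filter (δ ≤ a ·)) ≤ ⌊(∑' i, a i) / δ⌋₊ := by
  refine Nat.le_floor ((le_div_iff₀ hδ).2 ?_)
  calc #(s.filter (δ ≤ a ·)) * δ = ∑ _i ∈ s.filter (δ ≤ a ·), δ := by
        rw [sum_const, nsmul_eq_mul]
    _ ≤ ∑ i ∈ s.filter (δ ≤ a ·), a i := sum_le_sum fun i hi => (mem_filter.1 hi).2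
    _ ≤ ∑' i, a i := hs.sum_le_tsum _ fun i _ => ha i

theorem summable_and_tsum_le_of_le_shift {A B : ℕ → ℝ} {x : ℝ} {L K : ℕ} (hA : ∀ n, 0 ≤ A n)
    (hB : ∀ n, 0 ≤ B n) (hBs : Summable B) (hAx : ∀ n, A n ≤ x)
    (hAB : ∀ n, L ≤ n → A n ≤ B (K + n)) :
    Summable A ∧ ∑' n, A n ≤ L * x + ∑' n, B n := by
  have hshift : ∀ n, A (n + L) ≤ B (n + (K + L)) := fun n => by
    simpa only [add_comm, add_left_comm] using hAB (n + L) (Nat.le_add_left L n)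
  have hBs' : Summable fun n => B (n + (K + L)) := (summable_nat_add_iff _).2 hBs
  have hAs' : Summable fun n => A (n + L) := hBs'.of_nonneg_of_le (fun n => hA _) hshift
  have hAs : Summable A := (summable_nat_add_iff L).1 hAs'
  refine ⟨hAs, ?_⟩
  rw [← hAs.sum_add_tsum_nat_add L]
  refine add_le_add ?_ ?_
  · simpa using sum_le_card_nsmul (range L) A x fun n _ => hAx n
  · calc ∑' n, A (n + L) ≤ ∑' n, B (n + (K + L)) := hAs'.tsum_le_tsum hshift hBs'
      _ ≤ ∑' n, B n := tsum_comp_le_tsum_of_inj hBs hB (add_left_injective _)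

theorem average_le_average_prepend {S S' u γ Δ N m n : ℝ} (hn : 0 < n) (hN : 0 ≤ N) (hm : 0 ≤ m)
    (hγ : 0 ≤ γ) (hS : S ≤ S' + N * Δ) (hS' : S' ≤ n * u) (hΔ : Δ ≤ (m - 1) * γ)
    (hNm : N * m ^ 2 ≤ n) : S / n ≤ (N * m * (u + γ) + S') / (N * m + n) := by
  have hNm0 : 0 ≤ N * m := mul_nonneg hN hm
  rw [div_le_div_iff₀ hn (by positivity)]
  nlinarith [mul_le_mul_of_nonneg_right hS (add_nonneg hNm0 hn.le),
    mul_le_mul_of_nonneg_right hS' hNm0,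
    mul_le_mul_of_nonneg_left hΔ (mul_nonneg hN (add_nonneg hNm0 hn.le)),
    mul_le_mul_of_nonneg_left hNm (mul_nonneg hN hγ), mul_nonneg hNm0 (mul_nonneg hN hγ)]

def padLeft {α : Type*} (K : ℕ) (t : α) (b : ℕ → α) (i : ℕ) : α :=
  if i < K then t else b (i - K)

section PadLeft

variable {α : Type*} {K : ℕ} {t : α} {b : ℕ → α}

theorem padLeft_of_lt {i : ℕ} (hi : i < K) : padLeft K t b i = t := if_pos hi

theorem padLeft_add (i : ℕ) : padLeft K t b (i + K) = b i := by
  simp [padLeft]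

theorem padLeft_mem {s : Set α} (ht : t ∈ s) (hb : ∀ i, b i ∈ s) (i : ℕ) : padLeft K t b i ∈ s := by
  unfold padLeft; split_ifs <;> simp [ht, hb]

theorem sum_range_padLeft {M : Type*} [AddCommMonoid M] (g : α → M) (n : ℕ) :
    ∑ i ∈ range (K + n), g (padLeft K t b i) = K • g t + ∑ i ∈ range n, g (b i) := by
  rw [sum_range_add, sum_congr rfl fun i hi => by rw [padLeft_of_lt (mem_range.1 hi)], sum_const,
    card_range]
  exact congrArg _ (sum_congr rfl fun i _ => by rw [add_comm, padLeft_add])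

theorem summable_padLeft {b : ℕ → ℝ} {t : ℝ} : Summable (padLeft K t b) ↔ Summable b := by
  rw [← summable_nat_add_iff K]
  simp only [padLeft_add]

theorem tsum_padLeft {b : ℕ → ℝ} {t : ℝ} (hb : Summable b) :
    ∑' i, padLeft K t b i = K * t + ∑' i, b i := by
  rw [← (summable_padLeft.2 hb).sum_add_tsum_nat_add K,
    sum_congr rfl fun i hi => padLeft_of_lt (mem_range.1 hi), sum_const, card_range, nsmul_eq_mul]
  simp only [padLeft_add]

end PadLeft

noncomputable def prefixQam (f : ℝ → ℝ) (I : Set ℝ) (a : ℕ → ℝ) (n : ℕ) : ℝ :=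
  qam f I (n + 1) fun k : Fin (n + 1) => a k

def HardyOn (f : ℝ → ℝ) (I J : Set ℝ) (C : ℝ) : Prop :=
  ∀ a : ℕ → ℝ, (∀ n, a n ∈ J) → Summable a →
    Summable (prefixQam f I a) ∧ ∑' n, prefixQam f I a n ≤ C * ∑' n, a n

section PrefixMean

variable {I J : Set ℝ} {f : ℝ → ℝ} {a : ℕ → ℝ}

theorem prefixQam_mem (hconn : I.OrdConnected) (hf : ContinuousOn f I) (ha : ∀ i, a i ∈ I)
    (n : ℕ) : prefixQam f I a n ∈ I :=
  qam_mem hconn hf n.succ_ne_zero fun k => ha k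

theorem apply_prefixQam (hconn : I.OrdConnected) (hf : ContinuousOn f I) (ha : ∀ i, a i ∈ I)
    (n : ℕ) : f (prefixQam f I a n) = (∑ i ∈ range (n + 1), f (a i)) / (n + 1) := by
  rw [prefixQam, apply_qam hconn hf n.succ_ne_zero fun k => ha k,
    Fin.sum_univ_eq_sum_range (fun i => f (a i)), Nat.cast_succ]

theorem prefixQam_neg (hconn : I.OrdConnected) (hf : ContinuousOn f I) (hinj : I.InjOn f)
    (ha : ∀ i, a i ∈ I) : prefixQam (fun y => -f y) I a = prefixQam f I a :=
  funext fun n => qam_neg hconn hf hinj n.succ_ne_zero fun k => ha k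

theorem prefixQam_le_of_forall_le (hconn : I.OrdConnected) (hf : ContinuousOn f I)
    (hmono : StrictMonoOn f I) (ha : ∀ i, a i ∈ I) {x : ℝ} (hx : x ∈ I) (hax : ∀ i, a i ≤ x)
    (n : ℕ) : prefixQam f I a n ≤ x := by
  rw [← hmono.le_iff_le (prefixQam_mem hconn hf ha n) hx, apply_prefixQam hconn hf ha,
    div_le_iff₀ (by positivity)]
  simpa [mul_comm] using
    sum_le_card_nsmul (range (n + 1)) _ (f x) fun i _ => (hmono.le_iff_le (ha i) hx).2 (hax i)

theorem HardyOn.mono {C C' : ℝ} (hJ : J ⊆ Set.Ici 0) (h : HardyOn f I J C) (hC : C ≤ C') :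
    HardyOn f I J C' := fun a ha hs =>
  ⟨(h a ha hs).1, (h a ha hs).2.trans <|
    mul_le_mul_of_nonneg_right hC (tsum_nonneg fun n => hJ (ha n))⟩

theorem HardyOn.neg {C : ℝ} (hconn : I.OrdConnected) (hf : ContinuousOn f I) (hinj : I.InjOn f)
    (hJI : J ⊆ I) (h : HardyOn f I J C) : HardyOn (fun y => -f y) I J C := fun a ha hs => by
  rw [prefixQam_neg hconn hf hinj fun n => hJI (ha n)]
  exact h a ha hs

end PrefixMean

section Increasing

variable {I : Set ℝ} {f : ℝ → ℝ}

/-- The `N * m` copies of `t` raise the `f`-average enough to make up for the at most `N` terms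
lowered by the truncation at `ε'`, as soon as `n + 1 ≥ N * m ^ 2`. -/
theorem prefixQam_le_prefixQam_padLeft (hconn : I.OrdConnected) (hf : ContinuousOn f I)
    (hmono : StrictMonoOn f I) {a : ℕ → ℝ} (ha : ∀ i, a i ∈ I) {x ε' t : ℝ} (hx : x ∈ I)
    (hax : ∀ i, a i ≤ x) (hε' : ε' ∈ I) (ht : t ∈ I) (hε't : ε' < t) {N m n : ℕ}
    (hN : #((range (n + 1)).filter (ε' ≤ a ·)) ≤ N)
    (hm : max (f x - f ε') 0 ≤ (m - 1) * (f t - f ε')) (hn : N * m ^ 2 ≤ n + 1) :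
    prefixQam f I a n ≤ prefixQam f I (padLeft (N * m) t fun i => min (a i) ε') (N * m + n) := by
  set Δ := max (f x - f ε') 0
  have hmin : ∀ i, min (a i) ε' ∈ I := fun i => by
    rcases min_choice (a i) ε' with h | h <;> rw [h]
    exacts [ha i, hε']
  have hpad := padLeft_mem (K := N * m) ht hmin
  have hS : ∑ i ∈ range (n + 1), f (a i)
      ≤ ∑ i ∈ range (n + 1), f (min (a i) ε') + N * Δ := by
    calc ∑ i ∈ range (n + 1), f (a i)
        ≤ ∑ i ∈ range (n + 1), (f (min (a i) ε') + if ε' ≤ a i then Δ else 0) := by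
          refine sum_le_sum fun i _ => ?_
          split_ifs with h
          · rw [min_eq_right h]
            linarith [le_max_left (f x - f ε') 0, (hmono.le_iff_le (ha i) hx).2 (hax i)]
          · rw [min_eq_left (not_le.1 h).le, add_zero]
      _ ≤ ∑ i ∈ range (n + 1), f (min (a i) ε') + N * Δ := by
          rw [sum_add_distrib, ← sum_filter, sum_const, nsmul_eq_mul]
          gcongr
  have hS' : ∑ i ∈ range (n + 1), f (min (a i) ε') ≤ (n + 1 : ℕ) * f ε' := by
    simpa using sum_le_card_nsmul (range (n + 1)) _ (f ε') fun i _ =>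
      (hmono.le_iff_le (hmin i) hε').2 (min_le_right _ _)
  rw [← hmono.le_iff_le (prefixQam_mem hconn hf ha n) (prefixQam_mem hconn hf hpad _),
    apply_prefixQam hconn hf ha, apply_prefixQam hconn hf hpad, add_assoc, sum_range_padLeft,
    nsmul_eq_mul]
  have key := average_le_average_prepend (u := f ε') (γ := f t - f ε') (by positivity)
    (Nat.cast_nonneg N) (Nat.cast_nonneg m) (sub_nonneg.2 ((hmono.le_iff_le hε' ht).2 hε't.le))
    hS hS' hm (by exact_mod_cast hn)
  rw [add_sub_cancel] at key
  push_cast at key ⊢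
  rwa [add_assoc]

theorem HardyOn.tsum_prefixQam_le (hconn : I.OrdConnected) (hf : ContinuousOn f I)
    (hmono : StrictMonoOn f I) (hIpos : I ⊆ Set.Ioi 0) {ε ε' t C : ℝ}
    (hIoo : Set.Ioo 0 ε ⊆ I) (hH : HardyOn f I (Set.Ioo 0 ε) C) (hC : 0 ≤ C) (hε' : 0 < ε')
    (hε't : ε' < t) (htε : t < ε) {a : ℕ → ℝ} (ha : ∀ i, a i ∈ I) (hs : Summable a) {x : ℝ}
    (hx : x ∈ I) (hax : ∀ i, a i ≤ x) {m : ℕ}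
    (hm : max (f x - f ε') 0 ≤ (m - 1) * (f t - f ε')) :
    Summable (prefixQam f I a) ∧
      ∑' n, prefixQam f I a n ≤ ((m ^ 2 * x + C * m * t) / ε' + C) * ∑' n, a n := by
  have ha0 : ∀ i, 0 ≤ a i := fun i => (hIpos (ha i)).le
  set N := ⌊(∑' i, a i) / ε'⌋₊
  have hNε' : N * ε' ≤ ∑' i, a i :=
    (le_div_iff₀ hε').1 (Nat.floor_le (div_nonneg (tsum_nonneg ha0) hε'.le))
  set b := padLeft (N * m) t fun i => min (a i) ε'
  have hb : ∀ i, b i ∈ Set.Ioo 0 ε := padLeft_mem ⟨hε'.trans hε't, htε⟩ fun i =>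
    ⟨lt_min (hIpos (ha i)) hε', (min_le_right _ _).trans_lt (hε't.trans htε)⟩
  have hmin : Summable fun i => min (a i) ε' :=
    hs.of_nonneg_of_le (fun i => le_min (ha0 i) hε'.le) fun i => min_le_left _ _
  obtain ⟨hBs, hB⟩ := hH b hb (summable_padLeft.2 hmin)
  have hbsum : ∑' i, b i ≤ N * m * t + ∑' i, a i := by
    rw [tsum_padLeft hmin, Nat.cast_mul]
    exact add_le_add le_rfl (hmin.tsum_le_tsum (fun i => min_le_left _ _) hs)
  obtain ⟨hAs, hA⟩ := summable_and_tsum_le_of_le_shift (L := N * m ^ 2) (K := N * m)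
    (fun n => (hIpos (prefixQam_mem hconn hf ha n)).le)
    (fun n => (hIpos (prefixQam_mem hconn hf (fun i => hIoo (hb i)) n)).le) hBs
    (prefixQam_le_of_forall_le hconn hf hmono ha hx hax) fun n hn =>
      prefixQam_le_prefixQam_padLeft hconn hf hmono ha hx hax (hIoo ⟨hε', hε't.trans htε⟩)
        (hIoo ⟨hε'.trans hε't, htε⟩) hε't (card_filter_le_floor_tsum_div ha0 hs hε' _) hm
        (hn.trans n.le_succ)
  refine ⟨hAs, ?_⟩
  have hx0 : 0 < x := hIpos hx
  have ht0 : 0 < t := hε'.trans hε't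
  calc ∑' n, prefixQam f I a n ≤ N * m ^ 2 * x + C * (N * m * t + ∑' i, a i) := by
        push_cast at hA
        linarith [mul_le_mul_of_nonneg_left hbsum hC]
    _ = N * ε' * ((m ^ 2 * x + C * m * t) / ε') + C * ∑' i, a i := by
        field_simp
        ring
    _ ≤ (∑' i, a i) * ((m ^ 2 * x + C * m * t) / ε') + C * ∑' i, a i := by
        gcongr
    _ = ((m ^ 2 * x + C * m * t) / ε' + C) * ∑' n, a n := by ring

end Increasing

theorem exists_hardy_bound_of_strictMonoOn {I : Set ℝ} (hconn : I.OrdConnected)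
    (hIpos : I ⊆ Set.Ioi 0) {f : ℝ → ℝ} (hf : ContinuousOn f I) (hmono : StrictMonoOn f I)
    {ε : ℝ} (hε0 : 0 < ε) (hIoo : Set.Ioo 0 ε ⊆ I) (hH : ∃ C, HardyOn f I (Set.Ioo 0 ε) C) :
    ∃ c : ℝ → ℝ, (∀ x ∈ I, 0 < c x) ∧ ∀ a : ℕ → ℝ, (∀ n, a n ∈ I) → Summable a →
      Summable (prefixQam f I a) ∧ ∑' n, prefixQam f I a n ≤ c (⨆ n, a n) * ∑' n, a n := by
  obtain ⟨C₀, hC₀⟩ := hH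
  have hH := hC₀.mono (Set.Ioo_subset_Ioi_self.trans Set.Ioi_subset_Ici_self) (le_max_left C₀ 1)
  have hγ : 0 < f (3 * ε / 4) - f (ε / 2) :=
    sub_pos.2 (hmono (hIoo ⟨by linarith, by linarith⟩) (hIoo ⟨by linarith, by linarith⟩)
      (by linarith))
  set m : ℝ → ℕ := fun x => ⌈max (f x - f (ε / 2)) 0 / (f (3 * ε / 4) - f (ε / 2))⌉₊ + 1
  have hm : ∀ x, max (f x - f (ε / 2)) 0 ≤ (m x - 1) * (f (3 * ε / 4) - f (ε / 2)) := fun x => by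
    rw [Nat.cast_succ, add_sub_cancel_right, ← div_le_iff₀ hγ]
    exact Nat.le_ceil _
  refine ⟨fun x => (m x ^ 2 * x + max C₀ 1 * m x * (3 * ε / 4)) / (ε / 2) + max C₀ 1,
    fun x hx => by have : 0 < x := hIpos hx; positivity, fun a ha hs => ?_⟩
  obtain ⟨i, hi⟩ := exists_forall_le_of_tendsto_zero
    (Nat.cofinite_eq_atTop ▸ hs.tendsto_atTop_zero) (hIpos (ha 0))
  rw [ciSup_eq_of_forall_le_of_forall_lt_exists_gt hi fun w hw => ⟨i, hw⟩]
  exact hH.tsum_prefixQam_le hconn hf hmono hIpos hIoo (by positivity) (by positivity)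
    (by linarith) (by linarith) ha hs (ha i) hi (hm (a i))

theorem stmt_13_general (I : Set ℝ) (hconn : I.OrdConnected)
    (hIpos : I ⊆ Set.Ioi 0) (hInf : sInf I = 0)
    (f : ℝ → ℝ) (hf : ContinuousOn f I)
    (hmono : StrictMonoOn f I ∨ StrictAntiOn f I)
    (ε : ℝ) (hε : ε ∈ I)
    (hH : ∃ C : ℝ, ∀ a : ℕ → ℝ, (∀ n, a n ∈ Set.Ioo (0:ℝ) ε) → Summable a →
      Summable (fun n => qam f I (n + 1) (fun k : Fin (n + 1) => a (k : ℕ))) ∧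
      ∑' n, qam f I (n + 1) (fun k : Fin (n + 1) => a (k : ℕ)) ≤ C * ∑' n, a n) :
    ∃ c : ℝ → ℝ, (∀ x ∈ I, 0 < c x) ∧
      ∀ a : ℕ → ℝ, (∀ n, a n ∈ I) → Summable a →
        Summable (fun n => qam f I (n + 1) (fun k : Fin (n + 1) => a (k : ℕ))) ∧
        ∑' n, qam f I (n + 1) (fun k : Fin (n + 1) => a (k : ℕ)) ≤
          c (⨆ n, a n) * ∑' n, a n := by
  have hIoo : Set.Ioo 0 ε ⊆ I := hInf ▸ hconn.Ioo_csInf_subset ⟨0, fun _ hy => (hIpos hy).le⟩ hε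
  rcases hmono with hmono | hanti
  · exact exists_hardy_bound_of_strictMonoOn hconn hIpos hf hmono (hIpos hε) hIoo hH
  · obtain ⟨C, hC⟩ := hH
    obtain ⟨c, hc, hbound⟩ := exists_hardy_bound_of_strictMonoOn (f := fun y => -f y) hconn hIpos
      hf.neg hanti.neg (hIpos hε) hIoo ⟨C, HardyOn.neg hconn hf hanti.injOn hIoo hC⟩
    refine ⟨c, hc, fun a ha hs => ?_⟩
    have h := hbound a ha hs
    rw [prefixQam_neg hconn hf hanti.injOn ha] at h
    exact h

theorem stmt_13 (I : Set ℝ) (hne : I.Nonempty) (hconn : I.OrdConnected)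
    (hIpos : I ⊆ Set.Ioi 0) (hInf : sInf I = 0)
    (f : ℝ → ℝ) (hf : ContinuousOn f I)
    (hmono : StrictMonoOn f I ∨ StrictAntiOn f I)
    (ε : ℝ) (hε : ε ∈ I)
    (hH : ∃ C : ℝ, ∀ a : ℕ → ℝ, (∀ n, a n ∈ Set.Ioo (0:ℝ) ε) → Summable a →
      Summable (fun n => qam f I (n + 1) (fun k : Fin (n + 1) => a (k : ℕ))) ∧
      ∑' n, qam f I (n + 1) (fun k : Fin (n + 1) => a (k : ℕ)) ≤ C * ∑' n, a n) :
    ∃ c : ℝ → ℝ, (∀ x ∈ I, 0 < c x) ∧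
      ∀ a : ℕ → ℝ, (∀ n, a n ∈ I) → Summable a →
        Summable (fun n => qam f I (n + 1) (fun k : Fin (n + 1) => a (k : ℕ))) ∧
        ∑' n, qam f I (n + 1) (fun k : Fin (n + 1) => a (k : ℕ)) ≤
          c (⨆ n, a n) * ∑' n, a n :=
  stmt_13_general I hconn hIpos hInf f hf hmono ε hε hH
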